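/- For every n ≥ 1, the generator sums are conjugate by the permutation matrix σ_n: a^{(n)} + b^{(n)} = σ_n (a_L^{(n)} + b_L^{(n)}) σ_n^{-1}. -/
import Mathlib


open Matrix

/-- Equivalence identifying `Fin (2^n) ⊕ Fin (2^n)` with `Fin (2^(n+1))`. -/
def blockEquiv (n : ℕ) : Fin (2 ^ n) ⊕ Fin (2 ^ n) ≃ Fin (2 ^ (n + 1)) :=
  finSumFinEquiv.trans (finCongr (by rw [pow_succ, mul_two]))

/-- Assemble a `2^(n+1) × 2^(n+1)` matrix from four `2^n × 2^n` blocks. -/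
noncomputable def mkBlock {n : ℕ} (A B C D : Matrix (Fin (2 ^ n)) (Fin (2 ^ n)) ℝ) :
    Matrix (Fin (2 ^ (n + 1))) (Fin (2 ^ (n + 1))) ℝ :=
  Matrix.reindex (blockEquiv n) (blockEquiv n) (Matrix.fromBlocks A B C D)

/-- The pair of BBS translation generators. -/
noncomputable def abB : (n : ℕ) →
    Matrix (Fin (2 ^ n)) (Fin (2 ^ n)) ℝ × Matrix (Fin (2 ^ n)) (Fin (2 ^ n)) ℝ
  | 0 => (1, 1)
  | n + 1 => (mkBlock (abB n).1 (abB n).2 0 0, mkBlock 0 0 (abB n).1 (abB n).2)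

noncomputable def aB (n : ℕ) : Matrix (Fin (2 ^ n)) (Fin (2 ^ n)) ℝ := (abB n).1
noncomputable def bB (n : ℕ) : Matrix (Fin (2 ^ n)) (Fin (2 ^ n)) ℝ := (abB n).2

/-- The pair of lamplighter generators. -/
noncomputable def abL : (n : ℕ) →
    Matrix (Fin (2 ^ n)) (Fin (2 ^ n)) ℝ × Matrix (Fin (2 ^ n)) (Fin (2 ^ n)) ℝ
  | 0 => (1, 1)
  | n + 1 => (mkBlock 0 (abL n).2 (abL n).1 0, mkBlock (abL n).1 0 0 (abL n).2)

noncomputable def aL (n : ℕ) : Matrix (Fin (2 ^ n)) (Fin (2 ^ n)) ℝ := (abL n).1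
noncomputable def bL (n : ℕ) : Matrix (Fin (2 ^ n)) (Fin (2 ^ n)) ℝ := (abL n).2

/-- The BBS translation transition operator. -/
noncomputable def MB (n : ℕ) : Matrix (Fin (2 ^ n)) (Fin (2 ^ n)) ℝ :=
  (1 / 4 : ℝ) • (aB n + (aB n)ᵀ + bB n + (bB n)ᵀ)

/-- The lamplighter transition operator. -/
noncomputable def ML (n : ℕ) : Matrix (Fin (2 ^ n)) (Fin (2 ^ n)) ℝ :=
  (1 / 4 : ℝ) • (aL n + (aL n)ᵀ + bL n + (bL n)ᵀ)

/-- The Sierpinski gasket pattern: `g n m` is `g_m^{(n)} ∈ {0,1}` for `1 ≤ m ≤ n`,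
defined by `g_1^{(n)} = g_n^{(n)} = 1` and
`g_m^{(n)} = g_{m-1}^{(n-1)} + g_m^{(n-1)} mod 2` for `2 ≤ m ≤ n−1`. -/
def g : ℕ → ℕ → ℕ
  | 0, _ => 0
  | n + 1, m =>
    if m = 1 ∨ m = n + 1 then 1
    else if 2 ≤ m ∧ m ≤ n then (g n (m - 1) + g n m) % 2
    else 0

/-- The doubling operators `T_0` and `T_1` on binary tuples. -/
def Tmap (α : ℕ) (s : List ℕ) : List ℕ :=
  if α = 0 then s ++ s else s ++ s.map (fun x => 1 - x)

/-- The binary tuple `ν⁽ⁿ⁾ = (T_{g_1^{(n)}} ∘ T_{g_2^{(n)}} ∘ ⋯ ∘ T_{g_{n-1}^{(n)}})(0)`,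
of length `2^{n-1}`. -/
def nuList (n : ℕ) : List ℕ :=
  (List.range (n - 1)).foldr (fun i acc => Tmap (g n (i + 1)) acc) [0]

/-- The entry `ν_m^{(n)}`. -/
def nu (n m : ℕ) : ℕ := (nuList n).getD m 0

/-- The map `σ̂_n` on `I_n = {0, …, 2ⁿ−1}`: `σ̂_1 = id` and
`σ̂_n(j) = σ̂_{n-1}(j mod 2^{n-1}) + 2^{n-1}·c_j` where `c_{2m} = 1 − ν_m^{(n)}` and
`c_{2m+1} = ν_m^{(n)}`. -/
def sigmaHat : ℕ → ℕ → ℕ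
  | 0, j => j
  | 1, j => j
  | n + 2, j =>
    sigmaHat (n + 1) (j % 2 ^ (n + 1)) +
      2 ^ (n + 1) * (if j % 2 = 0 then 1 - nu (n + 2) (j / 2) else nu (n + 2) (j / 2))
/-- The permutation matrix `σₙ` with `σₙ e_j = e_{σ̂ₙ(j)}`. -/
noncomputable def sigmaMat (n : ℕ) : Matrix (Fin (2 ^ n)) (Fin (2 ^ n)) ℝ :=
  Matrix.of fun i j => if (i : ℕ) = sigmaHat n (j : ℕ) then (1 : ℝ) else 0


open Finset

lemma two_eq_zero_zmod2 : (2 : ZMod 2) = 0 := by decide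

/-- bit `s` of `x`, as an element of `ZMod 2`. -/
def bz (x s : ℕ) : ZMod 2 := ((x / 2 ^ s : ℕ) : ZMod 2)

lemma cast_mod_pow_two (a t : ℕ) (ht : 1 ≤ t) : ((a % 2 ^ t : ℕ) : ZMod 2) = (a : ZMod 2) := by
  conv_rhs => rw [← Nat.div_add_mod a (2 ^ t)]
  push_cast [two_eq_zero_zmod2]
  rw [zero_pow (by omega : t ≠ 0)]
  ring

lemma bz_of_lt {x s : ℕ} (h : x < 2 ^ s) : bz x s = 0 := by
  simp [bz, Nat.div_eq_of_lt h]

lemma bz_mod {x m s : ℕ} (h : s < m) : bz (x % 2 ^ m) s = bz x s := by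
  unfold bz
  rw [show 2 ^ m = 2 ^ s * 2 ^ (m - s) by rw [← pow_add]; congr 1; omega,
    Nat.mod_mul_right_div_self, cast_mod_pow_two _ _ (by omega)]

lemma bz_add_pow_lt {t k s : ℕ} (h : s < k) : bz (t + 2 ^ k) s = bz t s := by
  unfold bz
  rw [show 2 ^ k = 2 ^ s * 2 ^ (k - s) by rw [← pow_add]; congr 1; omega,
    Nat.add_mul_div_left _ _ (by positivity)]
  push_cast [two_eq_zero_zmod2]
  rw [zero_pow (by omega : k - s ≠ 0)]
  ring

lemma bz_add_pow_eq {t k : ℕ} : bz (t + 2 ^ k) k = bz t k + 1 := by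
  unfold bz
  rw [show t + 2 ^ k = t + 2 ^ k * 1 by ring, Nat.add_mul_div_left _ _ (by positivity)]
  push_cast; ring

lemma bz_div_two {x s : ℕ} : bz (x / 2) s = bz x (s + 1) := by
  unfold bz
  rw [Nat.div_div_eq_div_mul, pow_succ']

/-- two numbers below `2^n` with the same bits are equal -/
lemma eq_of_bz_eq : ∀ n, ∀ x < 2 ^ n, ∀ y < 2 ^ n, (∀ s < n, bz x s = bz y s) → x = y := by
  intro n
  induction n with
  | zero => intro x hx y hy _; omega
  | succ n ih =>
    intro x hx y hy h
    have h0 : x % 2 = y % 2 := by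
      have := h 0 (by omega)
      unfold bz at this
      simp only [pow_zero, Nat.div_one] at this
      have := congrArg ZMod.val this
      simpa [ZMod.val_natCast] using this
    have h1 : x / 2 = y / 2 := by
      apply ih (x / 2) (by omega) (y / 2) (by omega)
      intro s hs
      rw [bz_div_two, bz_div_two]
      exact h (s + 1) (by omega)
    omega

section digits
variable {d e : ℕ → ℕ}

lemma digitsum_lt (hd : ∀ k, d k ≤ 1) : ∀ n, (∑ k ∈ range n, 2 ^ k * d k) < 2 ^ n := by
  intro n
  induction n with
  | zero => simp
  | succ n ih =>
    rw [Finset.sum_range_succ]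
    have h1 : 2 ^ n * d n ≤ 2 ^ n * 1 := Nat.mul_le_mul_left _ (hd n)
    have h2 : 2 ^ (n + 1) = 2 ^ n * 2 := pow_succ 2 n
    omega

lemma digitsum_div_pow (hd : ∀ k, d k ≤ 1) (n : ℕ) :
    (∑ k ∈ range (n + 1), 2 ^ k * d k) / 2 ^ n = d n := by
  rw [Finset.sum_range_succ, Nat.add_mul_div_left _ _ (by positivity : (0:ℕ) < 2 ^ n),
    Nat.div_eq_of_lt (digitsum_lt hd n)]
  omega

lemma digitsum_div_two (hd : ∀ k, d k ≤ 1) (n : ℕ) :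
    (∑ k ∈ range (n + 1), 2 ^ k * d k) / 2 = ∑ k ∈ range n, 2 ^ k * d (k + 1) := by
  rw [Finset.sum_range_succ']
  have h1 : (∑ k ∈ range n, 2 ^ (k+1) * d (k + 1)) = 2 * ∑ k ∈ range n, 2 ^ k * d (k + 1) := by
    rw [Finset.mul_sum]; apply Finset.sum_congr rfl; intro k _; ring
  rw [h1, pow_zero, one_mul, Nat.mul_add_div (by norm_num),
    Nat.div_eq_of_lt (by have := hd 0; omega : d 0 < 2)]
  omega

lemma digitsum_inj (hd : ∀ k, d k ≤ 1) (he : ∀ k, e k ≤ 1) :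
    ∀ n, (∑ k ∈ range n, 2 ^ k * d k) = (∑ k ∈ range n, 2 ^ k * e k) → ∀ k < n, d k = e k := by
  intro n
  induction n with
  | zero => omega
  | succ n ih =>
    intro h k hk
    rw [Finset.sum_range_succ, Finset.sum_range_succ] at h
    have hda := digitsum_lt hd n
    have hea := digitsum_lt he n
    have hd' : 2 ^ n * d n = 0 ∨ 2 ^ n * d n = 2 ^ n := by
      rcases Nat.le_one_iff_eq_zero_or_eq_one.mp (hd n) with h'|h' <;> simp [h']
    have he' : 2 ^ n * e n = 0 ∨ 2 ^ n * e n = 2 ^ n := by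
      rcases Nat.le_one_iff_eq_zero_or_eq_one.mp (he n) with h'|h' <;> simp [h']
    have hp : 0 < 2 ^ n := by positivity
    have hdn := hd n; have hen := he n
    have h2 : d n = e n := by
      rcases hd' with h1|h1 <;> rcases he' with h2|h2 <;>
        (rw [h1, h2] at h; first | omega | (nlinarith))
    have h1 : (∑ k ∈ range n, 2 ^ k * d k) = ∑ k ∈ range n, 2 ^ k * e k := by
      rcases hd' with h1|h1 <;> rcases he' with h2|h2 <;> omega
    rcases Nat.lt_or_ge k n with hk' | hk'
    · exact ih h1 k hk'
    · have : k = n := by omega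
      rw [this]; exact h2

end digits

/-- the `k`-th bit of `σ̂ₙ x` (independent of `n`), as an element of `ZMod 2`. -/
noncomputable def sb (k x : ℕ) : ZMod 2 :=
  if k = 0 then ((x : ℕ) : ZMod 2)
  else 1 + ∑ s ∈ range (k + 1), (Nat.choose k s : ZMod 2) * ((x / 2 ^ s : ℕ) : ZMod 2)

/-- closed form of `σ̂ₙ`. -/
noncomputable def Fd (n x : ℕ) : ℕ := ∑ k ∈ range n, 2 ^ k * (sb k x).val

lemma sb_val_le (k x : ℕ) : (sb k x).val ≤ 1 := by
  have := ZMod.val_lt (sb k x); omega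

lemma Fd_lt (n x : ℕ) : Fd n x < 2 ^ n := digitsum_lt (fun k => sb_val_le k x) n

lemma sb_eq_of_pos {k : ℕ} (hk : k ≠ 0) (x : ℕ) :
    sb k x = 1 + ∑ s ∈ range (k + 1), (Nat.choose k s : ZMod 2) * bz x s := by
  simp [sb, hk, bz]

lemma sb_zero (x : ℕ) : sb 0 x = bz x 0 := by simp [sb, bz]

/-- `sb k` only depends on `x % 2^m` for `k < m`. -/
lemma sb_mod {k m x : ℕ} (h : k < m) : sb k (x % 2 ^ m) = sb k x := by
  rcases Nat.eq_zero_or_pos k with hk | hk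
  · subst hk; rw [sb_zero, sb_zero, bz_mod (by omega)]
  · rw [sb_eq_of_pos (by omega), sb_eq_of_pos (by omega)]
    congr 1
    apply Finset.sum_congr rfl
    intro s hs
    rw [bz_mod (by simp at hs; omega)]

/-- Pascal convolution for weighted bit-sums. -/
lemma pascal_sum (f : ℕ → ZMod 2) (k : ℕ) :
    (∑ s ∈ range (k + 1), (Nat.choose k s : ZMod 2) * f s) +
      (∑ s ∈ range (k + 1), (Nat.choose k s : ZMod 2) * f (s + 1)) =
    ∑ s ∈ range (k + 2), (Nat.choose (k + 1) s : ZMod 2) * f s := by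
  rw [Finset.sum_range_succ' (fun s => (Nat.choose (k+1) s : ZMod 2) * f s) (k+1)]
  have h1 : ∀ s ∈ range (k + 1), (Nat.choose (k+1) (s+1) : ZMod 2) * f (s+1)
      = (Nat.choose k s : ZMod 2) * f (s+1) + (Nat.choose k (s+1) : ZMod 2) * f (s+1) := by
    intro s _
    rw [Nat.choose_succ_succ]
    push_cast
    ring
  rw [Finset.sum_congr rfl h1, Finset.sum_add_distrib]
  have h2 : (∑ s ∈ range (k + 1), (Nat.choose k (s+1) : ZMod 2) * f (s+1))
      + (Nat.choose (k+1) 0 : ZMod 2) * f 0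
      = ∑ s ∈ range (k + 1), (Nat.choose k s : ZMod 2) * f s := by
    rw [Finset.sum_range_succ (fun s => (Nat.choose k (s+1) : ZMod 2) * f (s+1)) k,
      Finset.sum_range_succ' (fun s => (Nat.choose k s : ZMod 2) * f s) k,
      Nat.choose_succ_self]
    simp
  rw [← h2]
  ring

lemma g_le_one : ∀ n m, g n m ≤ 1 := by
  intro n m
  cases n with
  | zero => simp [g]
  | succ n =>
    unfold g
    split
    · omega
    · split
      · exact Nat.le_of_lt_succ (Nat.mod_lt _ (by norm_num))
      · omega

lemma g_cast : ∀ n m, m ≤ n → ((g (n + 1) (m + 1) : ℕ) : ZMod 2) = (Nat.choose n m : ZMod 2) := by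
  intro n
  induction n with
  | zero =>
    intro m hm
    interval_cases m
    simp [g]
  | succ n ih =>
    intro m hm
    rcases Nat.eq_zero_or_pos m with h0 | h1
    · subst h0; simp [g]
    rcases Nat.eq_or_lt_of_le hm with he | hl
    · subst he; simp [g]
    have hml : m ≤ n := by omega
    have hg : g (n + 2) (m + 1) = (g (n + 1) m + g (n + 1) (m + 1)) % 2 := by
      rw [g]
      rw [if_neg (by omega), if_pos (by omega)]
      norm_num
    have cast_mod_two : ∀ a : ℕ, ((a % 2 : ℕ) : ZMod 2) = (a : ZMod 2) := by
      intro a; have := cast_mod_pow_two a 1 le_rfl; rw [pow_one] at this; exact this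
    rw [hg, cast_mod_two]
    push_cast
    obtain ⟨m', rfl⟩ : ∃ m', m = m' + 1 := ⟨m - 1, by omega⟩
    rw [ih m' (by omega), ih (m' + 1) (by omega), Nat.choose_succ_succ]
    push_cast
    ring

/-- partial builds of `nuList`, with shifted `g`-indices -/
def Rl (n s k : ℕ) : List ℕ := (List.range k).foldr (fun i acc => Tmap (g n (i + 1 + s)) acc) [0]

lemma nuList_eq (n : ℕ) : nuList n = Rl n 0 (n - 1) := by
  unfold nuList Rl
  simp

lemma Tmap_length (α : ℕ) (L : List ℕ) : (Tmap α L).length = 2 * L.length := by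
  unfold Tmap; split <;> simp <;> omega

lemma Rl_succ (n s k : ℕ) : Rl n s (k + 1) = Tmap (g n (s + 1)) (Rl n (s + 1) k) := by
  unfold Rl
  rw [List.range_succ_eq_map, List.foldr_cons, List.foldr_map]
  congr 1
  · congr 1; omega
  · congr 1
    funext i acc
    congr 2
    omega

lemma Rl_length (n s k : ℕ) : (Rl n s k).length = 2 ^ k := by
  induction k generalizing s with
  | zero => rfl
  | succ k ih => rw [Rl_succ, Tmap_length, ih, pow_succ]; ring

lemma Tmap_mem_le {α : ℕ} {L : List ℕ} (h : ∀ x ∈ L, x ≤ 1) : ∀ x ∈ Tmap α L, x ≤ 1 := by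
  intro x hx
  unfold Tmap at hx
  split at hx <;> rw [List.mem_append] at hx
  · rcases hx with h' | h' <;> exact h x h'
  · rcases hx with h' | h'
    · exact h x h'
    · rw [List.mem_map] at h'
      obtain ⟨y, -, rfl⟩ := h'
      omega

lemma Rl_mem_le (n s k : ℕ) : ∀ x ∈ Rl n s k, x ≤ 1 := by
  induction k generalizing s with
  | zero => intro x hx; unfold Rl at hx; simp at hx; omega
  | succ k ih => rw [Rl_succ]; exact Tmap_mem_le (ih (s + 1))

lemma getD_le_one {L : List ℕ} (h : ∀ x ∈ L, x ≤ 1) (t : ℕ) : L.getD t 0 ≤ 1 := by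
  rcases Nat.lt_or_ge t L.length with ht | ht
  · rw [List.getD_eq_getElem L 0 ht]
    exact h _ (List.getElem_mem ht)
  · rw [List.getD_eq_default L 0 ht]
    omega

lemma Tmap_getD_left {α t : ℕ} {L : List ℕ} (h : t < L.length) :
    (Tmap α L).getD t 0 = L.getD t 0 := by
  unfold Tmap
  split <;> rw [List.getD_append _ _ _ _ h]

lemma Tmap_getD_right {α t : ℕ} {L : List ℕ} (hα : α ≤ 1) (hL : ∀ x ∈ L, x ≤ 1)
    (h1 : L.length ≤ t) (h2 : t < 2 * L.length) :
    (((Tmap α L).getD t 0 : ℕ) : ZMod 2) = (α : ZMod 2) + ((L.getD (t - L.length) 0 : ℕ) : ZMod 2) := by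
  have ht' : t - L.length < L.length := by omega
  unfold Tmap
  split
  · next hz =>
    subst hz
    rw [List.getD_append_right _ _ _ _ h1, Nat.cast_zero, zero_add]
  · next hz =>
    have hα1 : α = 1 := by omega
    rw [List.getD_append_right _ _ _ _ h1]
    rw [List.getD_eq_getElem _ 0 (by rw [List.length_map]; exact ht'), List.getElem_map]
    rw [List.getD_eq_getElem _ 0 ht']
    have hx := hL _ (List.getElem_mem ht')
    interval_cases h : L[t - L.length] <;> simp [hα1] <;> decide

lemma Rl_getD (n : ℕ) : ∀ k s, ∀ t < 2 ^ k,
    (((Rl n s k).getD t 0 : ℕ) : ZMod 2) =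
      ∑ i ∈ range k, ((g n (i + 1 + s) : ℕ) : ZMod 2) * bz t (k - 1 - i) := by
  intro k
  induction k with
  | zero =>
    intro s t ht
    interval_cases t
    simp [Rl]
  | succ k ih =>
    intro s t ht
    rw [Rl_succ]
    rw [Finset.sum_range_succ' (fun i => ((g n (i + 1 + s) : ℕ) : ZMod 2) * bz t (k + 1 - 1 - i)) k]
    rcases Nat.lt_or_ge t (2 ^ k) with h | h
    · rw [Tmap_getD_left (by rw [Rl_length]; exact h)]
      rw [ih (s + 1) t h]
      rw [show (0 : ℕ) + 1 + s = s + 1 by omega, show k + 1 - 1 - 0 = k by omega,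
        bz_of_lt h, mul_zero, add_zero]
      apply Finset.sum_congr rfl
      intro i hi
      rw [show i + 1 + (s + 1) = i + 1 + 1 + s by omega, show k - 1 - i = k + 1 - 1 - (i + 1) by omega]
    · have hlen : (Rl n (s + 1) k).length = 2 ^ k := Rl_length n (s + 1) k
      have ht2 : t < 2 * (Rl n (s + 1) k).length := by rw [hlen]; omega
      rw [Tmap_getD_right (g_le_one n (s + 1)) (Rl_mem_le n (s + 1) k) (by omega) ht2, hlen]
      obtain ⟨t', rfl⟩ : ∃ t', t = t' + 2 ^ k := ⟨t - 2 ^ k, by omega⟩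
      have ht' : t' < 2 ^ k := by omega
      rw [Nat.add_sub_cancel, ih (s + 1) t' ht']
      rw [show (0 : ℕ) + 1 + s = s + 1 by omega, show k + 1 - 1 - 0 = k by omega,
        bz_add_pow_eq, bz_of_lt ht', zero_add, mul_one]
      rw [add_comm]
      congr 1
      apply Finset.sum_congr rfl
      intro i hi
      simp only [Finset.mem_range] at hi
      rw [show i + 1 + (s + 1) = i + 1 + 1 + s by omega, show k - 1 - i = k + 1 - 1 - (i + 1) by omega,
        bz_add_pow_lt (by omega)]

lemma nu_le_one (n m : ℕ) : nu n m ≤ 1 := by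
  unfold nu
  rw [nuList_eq]
  exact getD_le_one (Rl_mem_le n 0 (n - 1)) m

lemma sum_reflect' {M : Type*} [AddCommMonoid M] (f G : ℕ → M) (n : ℕ)
    (h : ∀ i < n, f i = G (n - 1 - i)) : ∑ i ∈ range n, f i = ∑ i ∈ range n, G i := by
  rw [← Finset.sum_range_reflect G n]
  exact Finset.sum_congr rfl (fun i hi => h i (Finset.mem_range.mp hi))

lemma nu_cast {n t : ℕ} (ht : t < 2 ^ (n + 1)) :
    ((nu (n + 2) t : ℕ) : ZMod 2) =
      ∑ s ∈ range (n + 1), (Nat.choose (n + 1) (s + 1) : ZMod 2) * bz t s := by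
  unfold nu
  rw [nuList_eq]
  simp only [show n + 2 - 1 = n + 1 from rfl]
  rw [Rl_getD (n + 2) (n + 1) 0 t ht]
  apply sum_reflect'
  intro i hi
  rw [add_zero, g_cast (n + 1) i (by omega), show n + 1 - 1 - i = n - i from by omega]
  congr 1
  rw [show n - i + 1 = n + 1 - i from by omega, Nat.choose_symm (show i ≤ n + 1 by omega)]

lemma cast_one_sub {x : ℕ} (hx : x ≤ 1) : ((1 - x : ℕ) : ZMod 2) = 1 + (x : ZMod 2) := by
  interval_cases x <;> decide

lemma val_eq_of_le_one {c : ℕ} (hc : c ≤ 1) {v : ZMod 2} (h : (c : ZMod 2) = v) : c = v.val := by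
  subst h
  rw [ZMod.val_natCast]
  omega

lemma sigmaHat_eq_Fd : ∀ n, 1 ≤ n → ∀ j < 2 ^ n, sigmaHat n j = Fd n j := by
  intro n
  induction n using Nat.strong_induction_on with
  | _ n ih =>
    match n with
    | 0 => intro h; exact absurd h (by norm_num)
    | 1 =>
      intro _ j hj
      have : sigmaHat 1 j = j := rfl
      rw [this]
      unfold Fd
      rw [Finset.sum_range_one, sb_zero]
      unfold bz
      rw [pow_zero, Nat.div_one, ZMod.val_natCast]
      omega
    | (n + 2) =>
      intro _ j hj
      have hrec : sigmaHat (n + 2) j = sigmaHat (n + 1) (j % 2 ^ (n + 1)) +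
          2 ^ (n + 1) * (if j % 2 = 0 then 1 - nu (n + 2) (j / 2) else nu (n + 2) (j / 2)) := rfl
      set c := if j % 2 = 0 then 1 - nu (n + 2) (j / 2) else nu (n + 2) (j / 2) with hc
      have hcle : c ≤ 1 := by
        have := nu_le_one (n + 2) (j / 2)
        rw [hc]; split <;> omega
      have hj2 : j / 2 < 2 ^ (n + 1) := by
        have : j < 2 ^ (n + 2) := hj
        rw [pow_succ] at this
        omega
      have hb0 : bz j 0 = ((j % 2 : ℕ) : ZMod 2) := by
        have h := cast_mod_pow_two j 1 le_rfl
        rw [pow_one] at h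
        unfold bz
        rw [pow_zero, Nat.div_one]
        exact h.symm
      have hcc : ((c : ℕ) : ZMod 2) = sb (n + 1) j := by
        rw [sb_eq_of_pos (by omega), Finset.sum_range_succ'
          (fun s => (Nat.choose (n + 1) s : ZMod 2) * bz j s) (n + 1)]
        have hnu : ((nu (n + 2) (j / 2) : ℕ) : ZMod 2)
            = ∑ s ∈ range (n + 1), (Nat.choose (n + 1) (s + 1) : ZMod 2) * bz j (s + 1) := by
          rw [nu_cast hj2]
          apply Finset.sum_congr rfl
          intro s _
          rw [bz_div_two]
        rw [hc]
        rcases Nat.eq_zero_or_pos (j % 2) with hpar | hpar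
        · rw [if_pos hpar, cast_one_sub (nu_le_one _ _), hnu]
          rw [hb0, hpar]
          push_cast
          ring
        · rw [if_neg (by omega), hnu]
          have hpar1 : j % 2 = 1 := by omega
          rw [hb0, hpar1, Nat.choose_zero_right, Nat.cast_one]
          have h2 : (2 : ZMod 2) = 0 := by decide
          linear_combination (-1 : ZMod 2) * h2
      have hcval : c = (sb (n + 1) j).val := val_eq_of_le_one hcle hcc
      rw [hrec, ih (n + 1) (by omega) (by omega) _ (Nat.mod_lt _ (by positivity)), hcval]
      unfold Fd
      rw [Finset.sum_range_succ (fun k => 2 ^ k * (sb k j).val) (n + 1)]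
      congr 1
      apply Finset.sum_congr rfl
      intro k hk
      simp only [Finset.mem_range] at hk
      rw [sb_mod hk]

lemma sigmaHat_lt {n j : ℕ} (hn : 1 ≤ n) (hj : j < 2 ^ n) : sigmaHat n j < 2 ^ n := by
  rw [sigmaHat_eq_Fd n hn j hj]; exact Fd_lt n j

lemma sigmaHat_inj {n : ℕ} (hn : 1 ≤ n) {x y : ℕ} (hx : x < 2 ^ n) (hy : y < 2 ^ n)
    (h : sigmaHat n x = sigmaHat n y) : x = y := by
  rw [sigmaHat_eq_Fd n hn x hx, sigmaHat_eq_Fd n hn y hy] at h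
  have hd := digitsum_inj (fun k => sb_val_le k x) (fun k => sb_val_le k y) n h
  have hsb : ∀ k < n, sb k x = sb k y := by
    intro k hk
    have := hd k hk
    have h1 : ((sb k x).val : ZMod 2) = ((sb k y).val : ZMod 2) := by rw [this]
    rwa [ZMod.natCast_val, ZMod.natCast_val, ZMod.cast_id, ZMod.cast_id] at h1
  -- triangular extraction of bits
  have hbz : ∀ k < n, bz x k = bz y k := by
    intro k
    induction k using Nat.strong_induction_on with
    | _ k ihk =>
      intro hk
      rcases Nat.eq_zero_or_pos k with h0 | h0
      · subst h0
        have := hsb 0 hk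
        rwa [sb_zero, sb_zero] at this
      · have h1 := hsb k hk
        rw [sb_eq_of_pos (by omega), sb_eq_of_pos (by omega)] at h1
        rw [Finset.sum_range_succ, Finset.sum_range_succ] at h1
        have h2 : ∑ s ∈ range k, (Nat.choose k s : ZMod 2) * bz x s
            = ∑ s ∈ range k, (Nat.choose k s : ZMod 2) * bz y s := by
          apply Finset.sum_congr rfl
          intro s hs
          simp only [Finset.mem_range] at hs
          rw [ihk s hs (by omega)]
        rw [h2, Nat.choose_self] at h1
        have := add_left_cancel (add_left_cancel h1)
        simpa using this
  exact eq_of_bz_eq n x hx y hy hbz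

/-- the column maps of the lamplighter generators: `(hatP n j).1` is the row of the `1`
in column `j` of `aL n`, and `.2` for `bL n`. -/
def hatP : ℕ → ℕ → ℕ × ℕ
  | 0, j => (j, j)
  | n + 1, j =>
    if j < 2 ^ n then ((hatP n j).1 + 2 ^ n, (hatP n j).1)
    else ((hatP n (j - 2 ^ n)).2, (hatP n (j - 2 ^ n)).2 + 2 ^ n)

lemma hatP_lt : ∀ n, ∀ j < 2 ^ n, (hatP n j).1 < 2 ^ n ∧ (hatP n j).2 < 2 ^ n := by
  intro n
  induction n with
  | zero => intro j hj; interval_cases j; constructor <;> norm_num [hatP]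
  | succ n ih =>
    intro j hj
    rw [hatP]
    split
    · next h =>
      have := (ih j h).1
      constructor <;> simp only [] <;> rw [pow_succ] <;> omega
    · next h =>
      have := (ih (j - 2 ^ n) (by rw [pow_succ] at hj; omega)).2
      constructor <;> simp only [] <;> rw [pow_succ] <;> omega

lemma hatP_pair : ∀ n, ∀ j < 2 ^ (n + 1),
    (hatP (n + 1) j).1 = (hatP (n + 1) j).2 + 2 ^ n ∨
    (hatP (n + 1) j).2 = (hatP (n + 1) j).1 + 2 ^ n := by
  intro n j hj
  rw [hatP]
  split
  · left; rfl
  · right; rfl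

lemma zmod2_two : (2 : ZMod 2) = 0 := by decide

lemma bz_hat1 : ∀ n, ∀ j < 2 ^ n, ∀ s < n,
    bz ((hatP n j).1) s = 1 + bz j s + bz j (s + 1) := by
  intro n
  induction n with
  | zero => omega
  | succ n ih =>
    intro j hj s hs
    have hj2 : j < 2 ^ n + 2 ^ n := by rw [pow_succ] at hj; omega
    rw [hatP]
    split
    · next h =>
      have hx : (hatP n j).1 < 2 ^ n := (hatP_lt n j h).1
      simp only []
      rcases Nat.lt_or_ge s n with hsn | hsn
      · rw [bz_add_pow_lt hsn, ih j h s hsn]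
      · have hs' : s = n := by omega
        subst hs'
        rw [bz_add_pow_eq, bz_of_lt hx, bz_of_lt h, bz_of_lt (show j < 2 ^ (s + 1) by omega)]
        ring
    · next h =>
      set j' := j - 2 ^ n with hj'
      have hjlt : j' < 2 ^ n := by omega
      have hjeq : j = j' + 2 ^ n := by omega
      simp only []
      rcases Nat.eq_zero_or_pos n with hn0 | hn1
      · -- n = 0 : j = 1, j' = 0, s = 0
        subst hn0
        have : j' = 0 := by omega
        rw [this]
        have hs0 : s = 0 := by omega
        subst hs0
        have hj1 : j = 1 := by omega
        rw [hj1]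
        decide
      -- n ≥ 1
      obtain ⟨m, rfl⟩ : ∃ m, n = m + 1 := ⟨n - 1, by omega⟩
      have hpair := hatP_pair m j' hjlt
      have hlt := hatP_lt (m + 1) j' hjlt
      have hflip : bz (hatP (m + 1) j').2 m = bz (hatP (m + 1) j').1 m + 1 := by
        rcases hpair with hp | hp
        · rw [hp, bz_add_pow_eq]; linear_combination (-1 : ZMod 2) * zmod2_two
        · rw [hp, bz_add_pow_eq]
      have hlow : ∀ r < m, bz (hatP (m + 1) j').2 r = bz (hatP (m + 1) j').1 r := by
        intro r hr
        rcases hpair with hp | hp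
        · rw [hp, bz_add_pow_lt hr]
        · rw [hp, bz_add_pow_lt hr]
      rcases Nat.lt_or_ge s m with hsm | hsm
      · -- s < m = n - 1
        rw [hlow s hsm, ih j' hjlt s (by omega), hjeq,
          bz_add_pow_lt (show s < m + 1 by omega), bz_add_pow_lt (show s + 1 < m + 1 by omega)]
      rcases Nat.eq_or_lt_of_le hsm with hse | hsl
      · -- s = m = n - 1
        have hse' : s = m := hse.symm
        subst hse'
        have e1 := ih j' hjlt s (by omega)
        have e2 : bz j' (s + 1) = 0 := bz_of_lt hjlt
        have eb : bz j s = bz j' s := by rw [hjeq, bz_add_pow_lt (by omega)]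
        have ec : bz j (s + 1) = bz j' (s + 1) + 1 := by rw [hjeq, bz_add_pow_eq]
        rw [hflip, e1, eb, ec, e2]
        ring
      · -- s = m + 1 = n
        have hse : s = m + 1 := by omega
        subst hse
        rw [bz_of_lt hlt.2, hjeq, bz_add_pow_eq, bz_of_lt hjlt,
          bz_of_lt (show j' + 2 ^ (m + 1) < 2 ^ (m + 1 + 1) by rw [pow_succ]; omega)]
        linear_combination (-1 : ZMod 2) * zmod2_two

lemma bz_hat2_lt {n j s : ℕ} (hj : j < 2 ^ (n + 1)) (hs : s < n) :
    bz ((hatP (n + 1) j).2) s = 1 + bz j s + bz j (s + 1) := by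
  rcases hatP_pair n j hj with hp | hp
  · have : bz ((hatP (n + 1) j).1) s = bz ((hatP (n + 1) j).2) s := by
      rw [hp, bz_add_pow_lt hs]
    rw [← this, bz_hat1 (n + 1) j hj s (by omega)]
  · rw [hp, bz_add_pow_lt hs, bz_hat1 (n + 1) j hj s (by omega)]

lemma bz_hat2_flip {n j : ℕ} (hj : j < 2 ^ (n + 1)) :
    bz ((hatP (n + 1) j).2) n = bz ((hatP (n + 1) j).1) n + 1 := by
  rcases hatP_pair n j hj with hp | hp
  · rw [hp, bz_add_pow_eq]; linear_combination (-1 : ZMod 2) * zmod2_two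
  · rw [hp, bz_add_pow_eq]

/-- `sb k` of the hat values shifts the index: the `.1` case. -/
lemma sb_hat (n j : ℕ) (hj : j < 2 ^ n) (k : ℕ) (hk : k < n - 1) (x : ℕ)
    (hx : ∀ s ≤ k, bz x s = 1 + bz j s + bz j (s + 1)) :
    sb k x = sb (k + 1) j := by
  rcases Nat.eq_zero_or_pos k with h0 | h1
  · subst h0
    rw [sb_zero, sb_eq_of_pos (by omega)]
    rw [hx 0 (by omega)]
    rw [Finset.sum_range_succ, Finset.sum_range_succ, Finset.sum_range_zero]
    norm_num
    ring
  · rw [sb_eq_of_pos (by omega), sb_eq_of_pos (by omega)]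
    congr 1
    have h2 : ∀ s ∈ range (k + 1), (Nat.choose k s : ZMod 2) * bz x s
        = ((Nat.choose k s : ZMod 2) * 1 + ((Nat.choose k s : ZMod 2) * bz j s
          + (Nat.choose k s : ZMod 2) * bz j (s + 1))) := by
      intro s hs
      simp only [Finset.mem_range] at hs
      rw [hx s (by omega)]
      ring
    rw [Finset.sum_congr rfl h2, Finset.sum_add_distrib, Finset.sum_add_distrib]
    have h3 : (∑ s ∈ range (k + 1), (Nat.choose k s : ZMod 2) * 1) = 0 := by
      have : (∑ s ∈ range (k + 1), (Nat.choose k s : ZMod 2) * 1)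
          = ((∑ s ∈ range (k + 1), Nat.choose k s : ℕ) : ZMod 2) := by
        push_cast; ring
      rw [this, Nat.sum_range_choose]
      push_cast [zmod2_two]
      exact zero_pow (by omega)
    rw [h3, pascal_sum (bz j) k, zero_add]

lemma sb_hat1 {n j k : ℕ} (hj : j < 2 ^ n) (hk : k < n - 1) :
    sb k ((hatP n j).1) = sb (k + 1) j :=
  sb_hat n j hj k hk _ (fun s hs => bz_hat1 n j hj s (by omega))

lemma sb_hat2 {n j k : ℕ} (hj : j < 2 ^ n) (hk : k < n - 1) :
    sb k ((hatP n j).2) = sb (k + 1) j := by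
  obtain ⟨m, rfl⟩ : ∃ m, n = m + 1 := ⟨n - 1, by omega⟩
  exact sb_hat (m + 1) j hj k hk _ (fun s hs => bz_hat2_lt hj (by omega))

lemma sb_hat_top {n j : ℕ} (hj : j < 2 ^ (n + 1)) :
    sb n ((hatP (n + 1) j).1) + sb n ((hatP (n + 1) j).2) = 1 := by
  rcases Nat.eq_zero_or_pos n with h0 | h1
  · subst h0
    rw [sb_zero, sb_zero, bz_hat2_flip hj]
    generalize bz ((hatP (0 + 1) j).1) 0 = a
    revert a; decide
  · rw [sb_eq_of_pos (by omega), sb_eq_of_pos (by omega)]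
    rw [Finset.sum_range_succ, Finset.sum_range_succ]
    have h2 : ∑ s ∈ range n, (Nat.choose n s : ZMod 2) * bz ((hatP (n + 1) j).1) s
        = ∑ s ∈ range n, (Nat.choose n s : ZMod 2) * bz ((hatP (n + 1) j).2) s := by
      apply Finset.sum_congr rfl
      intro s hs
      simp only [Finset.mem_range] at hs
      rw [bz_hat1 (n + 1) j hj s (by omega), bz_hat2_lt hj hs]
    rw [h2, bz_hat2_flip hj, Nat.choose_self, Nat.cast_one]
    generalize (∑ s ∈ range n, ((Nat.choose n s : ZMod 2)) * bz ((hatP (n + 1) j).2) s) = S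
    generalize bz ((hatP (n + 1) j).1) n = a
    revert S a
    decide

/-- key structural fact: the images of the two hat values under `Fd` are
`Fd n j / 2` and `Fd n j / 2 + 2^(n-1)` in some order. -/
lemma Fd_hat (n j : ℕ) (hn : 1 ≤ n) (hj : j < 2 ^ n) :
    (Fd n ((hatP n j).1) = Fd n j / 2 ∧ Fd n ((hatP n j).2) = Fd n j / 2 + 2 ^ (n - 1)) ∨
    (Fd n ((hatP n j).2) = Fd n j / 2 ∧ Fd n ((hatP n j).1) = Fd n j / 2 + 2 ^ (n - 1)) := by
  obtain ⟨m, rfl⟩ : ∃ m, n = m + 1 := ⟨n - 1, by omega⟩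
  have hdle : ∀ x k, (sb k x).val ≤ 1 := fun x k => sb_val_le k x
  have hm : Fd (m + 1) j / 2 = ∑ k ∈ range m, 2 ^ k * (sb (k + 1) j).val := by
    unfold Fd
    exact digitsum_div_two (fun k => sb_val_le k j) m
  have hlow : ∀ x, (∀ k < m, sb k x = sb (k + 1) j) →
      Fd (m + 1) x = Fd (m + 1) j / 2 + 2 ^ m * (sb m x).val := by
    intro x hx
    have hx' : Fd (m + 1) x = ∑ k ∈ range m, 2 ^ k * (sb k x).val + 2 ^ m * (sb m x).val :=
      Finset.sum_range_succ _ m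
    rw [hx', hm]
    congr 1
    apply Finset.sum_congr rfl
    intro k hk
    simp only [Finset.mem_range] at hk
    rw [hx k hk]
  have h1 := hlow ((hatP (m + 1) j).1) (fun k hk => sb_hat1 hj (by omega))
  have h2 := hlow ((hatP (m + 1) j).2) (fun k hk => sb_hat2 hj (by omega))
  have htop := sb_hat_top hj
  set tA := (sb m ((hatP (m + 1) j).1)).val with htA
  set tB := (sb m ((hatP (m + 1) j).2)).val with htB
  have htAB : tA + tB = 1 := by
    have hcast : ((tA + tB : ℕ) : ZMod 2) = 1 := by
      push_cast
      rw [htA, htB, ZMod.natCast_val, ZMod.natCast_val, ZMod.cast_id, ZMod.cast_id]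
      exact htop
    have h1' : tA ≤ 1 := by rw [htA]; exact sb_val_le _ _
    have h2' : tB ≤ 1 := by rw [htB]; exact sb_val_le _ _
    have hv := congrArg ZMod.val hcast
    rw [ZMod.val_natCast] at hv
    have : (1 : ZMod 2).val = 1 := rfl
    omega
  rcases Nat.eq_zero_or_pos tA with h0 | hpos
  · left
    constructor
    · rw [h1, h0]; omega
    · rw [h2, show tB = 1 by omega, Nat.add_sub_cancel]; ring
  · right
    constructor
    · rw [h2, show tB = 0 by omega]; omega
    · rw [h1, show tA = 1 by omega, Nat.add_sub_cancel]; ring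

lemma blockEquiv_inl_val {n : ℕ} (k : Fin (2 ^ n)) :
    ((blockEquiv n (Sum.inl k) : Fin (2 ^ (n + 1))) : ℕ) = (k : ℕ) := by
  simp [blockEquiv]

lemma blockEquiv_inr_val {n : ℕ} (k : Fin (2 ^ n)) :
    ((blockEquiv n (Sum.inr k) : Fin (2 ^ (n + 1))) : ℕ) = 2 ^ n + (k : ℕ) := by
  simp [blockEquiv]
  omega

lemma blockEquiv_surj {n : ℕ} (i : Fin (2 ^ (n + 1))) :
    (∃ k, i = blockEquiv n (Sum.inl k)) ∨ (∃ k, i = blockEquiv n (Sum.inr k)) := by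
  rcases h : (blockEquiv n).symm i with k | k
  · left; exact ⟨k, by rw [← h, Equiv.apply_symm_apply]⟩
  · right; exact ⟨k, by rw [← h, Equiv.apply_symm_apply]⟩

lemma mkBlock_ll {n : ℕ} (A B C D : Matrix (Fin (2 ^ n)) (Fin (2 ^ n)) ℝ) (i j : Fin (2 ^ n)) :
    mkBlock A B C D (blockEquiv n (Sum.inl i)) (blockEquiv n (Sum.inl j)) = A i j := by
  simp [mkBlock]

lemma mkBlock_lr {n : ℕ} (A B C D : Matrix (Fin (2 ^ n)) (Fin (2 ^ n)) ℝ) (i j : Fin (2 ^ n)) :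
    mkBlock A B C D (blockEquiv n (Sum.inl i)) (blockEquiv n (Sum.inr j)) = B i j := by
  simp [mkBlock]

lemma mkBlock_rl {n : ℕ} (A B C D : Matrix (Fin (2 ^ n)) (Fin (2 ^ n)) ℝ) (i j : Fin (2 ^ n)) :
    mkBlock A B C D (blockEquiv n (Sum.inr i)) (blockEquiv n (Sum.inl j)) = C i j := by
  simp [mkBlock]

lemma mkBlock_rr {n : ℕ} (A B C D : Matrix (Fin (2 ^ n)) (Fin (2 ^ n)) ℝ) (i j : Fin (2 ^ n)) :
    mkBlock A B C D (blockEquiv n (Sum.inr i)) (blockEquiv n (Sum.inr j)) = D i j := by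
  simp [mkBlock]

lemma div2_add_pow {n j : ℕ} (hj : j < 2 ^ n) : (2 ^ n + j) / 2 = j / 2 + 2 ^ n / 2 := by
  cases n with
  | zero => omega
  | succ m =>
    rw [pow_succ]
    omega

lemma abB_apply : ∀ n (i j : Fin (2 ^ n)),
    aB n i j = (if (i : ℕ) = (j : ℕ) / 2 then (1 : ℝ) else 0) ∧
    bB n i j = (if (i : ℕ) = (j : ℕ) / 2 + 2 ^ n / 2 then (1 : ℝ) else 0) := by
  intro n
  induction n with
  | zero =>
    intro i j
    have hi : (i : ℕ) = 0 := by have := i.isLt; norm_num at this; omega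
    have hj : (j : ℕ) = 0 := by have := j.isLt; norm_num at this; omega
    have hij : i = j := Fin.ext (by omega)
    constructor <;> simp [aB, bB, abB, Matrix.one_apply, hij, hi, hj]
  | succ n ih =>
    intro i j
    have haB : aB (n + 1) = mkBlock (aB n) (bB n) 0 0 := rfl
    have hbB : bB (n + 1) = mkBlock 0 0 (aB n) (bB n) := rfl
    have hp : 2 ^ (n + 1) / 2 = 2 ^ n := by rw [pow_succ]; omega
    rcases blockEquiv_surj i with ⟨i', rfl⟩ | ⟨i', rfl⟩ <;>
      rcases blockEquiv_surj j with ⟨j', rfl⟩ | ⟨j', rfl⟩ <;>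
      rw [haB, hbB] <;>
      simp only [mkBlock_ll, mkBlock_lr, mkBlock_rl, mkBlock_rr,
        blockEquiv_inl_val, blockEquiv_inr_val, Matrix.zero_apply] <;>
      constructor
    · exact (ih i' j').1
    · rw [hp]
      rw [if_neg (by have := i'.isLt; have := j'.isLt; omega)]
    · rw [(ih i' j').2]
      apply if_congr _ rfl rfl
      rw [div2_add_pow j'.isLt]
    · rw [hp, if_neg (by have := i'.isLt; have := j'.isLt; omega)]
    · rw [if_neg (by have := i'.isLt; have := j'.isLt; omega)]
    · rw [hp, (ih i' j').1]
      apply if_congr _ rfl rfl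
      omega
    · rw [if_neg (by have := i'.isLt; have := j'.isLt; omega)]
    · rw [hp, (ih i' j').2]
      apply if_congr _ rfl rfl
      rw [div2_add_pow j'.isLt]
      have := j'.isLt
      omega

lemma abL_apply : ∀ n (i j : Fin (2 ^ n)),
    aL n i j = (if (i : ℕ) = (hatP n (j : ℕ)).1 then (1 : ℝ) else 0) ∧
    bL n i j = (if (i : ℕ) = (hatP n (j : ℕ)).2 then (1 : ℝ) else 0) := by
  intro n
  induction n with
  | zero =>
    intro i j
    have hi : (i : ℕ) = 0 := by have := i.isLt; norm_num at this; omega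
    have hj : (j : ℕ) = 0 := by have := j.isLt; norm_num at this; omega
    have hij : i = j := Fin.ext (by omega)
    constructor <;> simp [aL, bL, abL, Matrix.one_apply, hij, hi, hj, hatP]
  | succ n ih =>
    intro i j
    have haL : aL (n + 1) = mkBlock 0 (bL n) (aL n) 0 := rfl
    have hbL : bL (n + 1) = mkBlock (aL n) 0 0 (bL n) := rfl
    rcases blockEquiv_surj i with ⟨i', rfl⟩ | ⟨i', rfl⟩ <;>
      rcases blockEquiv_surj j with ⟨j', rfl⟩ | ⟨j', rfl⟩ <;>
      rw [haL, hbL] <;>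
      simp only [mkBlock_ll, mkBlock_lr, mkBlock_rl, mkBlock_rr,
        blockEquiv_inl_val, blockEquiv_inr_val, Matrix.zero_apply] <;>
      constructor
    -- (inl, inl)
    · rw [show hatP (n + 1) (j' : ℕ) = ((hatP n j').1 + 2 ^ n, (hatP n j').1) by
        rw [hatP, if_pos j'.isLt]]
      rw [if_neg (by have := i'.isLt; omega)]
    · rw [show hatP (n + 1) (j' : ℕ) = ((hatP n j').1 + 2 ^ n, (hatP n j').1) by
        rw [hatP, if_pos j'.isLt]]
      exact (ih i' j').1
    -- (inl, inr)
    · rw [show hatP (n + 1) (2 ^ n + (j' : ℕ))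
          = ((hatP n j').2, (hatP n j').2 + 2 ^ n) by
        rw [hatP, if_neg (by omega), Nat.add_sub_cancel_left]]
      exact (ih i' j').2
    · rw [show hatP (n + 1) (2 ^ n + (j' : ℕ))
          = ((hatP n j').2, (hatP n j').2 + 2 ^ n) by
        rw [hatP, if_neg (by omega), Nat.add_sub_cancel_left]]
      rw [if_neg (by have := i'.isLt; omega)]
    -- (inr, inl)
    · rw [show hatP (n + 1) (j' : ℕ) = ((hatP n j').1 + 2 ^ n, (hatP n j').1) by
        rw [hatP, if_pos j'.isLt]]
      rw [(ih i' j').1]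
      apply if_congr _ rfl rfl
      omega
    · rw [show hatP (n + 1) (j' : ℕ) = ((hatP n j').1 + 2 ^ n, (hatP n j').1) by
        rw [hatP, if_pos j'.isLt]]
      rw [if_neg (by have := (hatP_lt n j' j'.isLt).1; omega)]
    -- (inr, inr)
    · rw [show hatP (n + 1) (2 ^ n + (j' : ℕ))
          = ((hatP n j').2, (hatP n j').2 + 2 ^ n) by
        rw [hatP, if_neg (by omega), Nat.add_sub_cancel_left]]
      rw [if_neg (by have := (hatP_lt n j' j'.isLt).2; omega)]
    · rw [show hatP (n + 1) (2 ^ n + (j' : ℕ))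
          = ((hatP n j').2, (hatP n j').2 + 2 ^ n) by
        rw [hatP, if_neg (by omega), Nat.add_sub_cancel_left]]
      rw [(ih i' j').2]
      apply if_congr _ rfl rfl
      omega

lemma sum_if_right {N c : ℕ} (hc : c < N) (f : Fin N → ℝ) :
    (∑ k : Fin N, f k * (if (k : ℕ) = c then 1 else 0)) = f ⟨c, hc⟩ := by
  rw [Finset.sum_eq_single ⟨c, hc⟩]
  · simp
  · intro k _ hk
    rw [if_neg (fun h => hk (Fin.ext h)), mul_zero]
  · intro h
    exact absurd (Finset.mem_univ _) h

lemma sigma_trans_mul (n : ℕ) (hn : 1 ≤ n) : (sigmaMat n)ᵀ * sigmaMat n = 1 := by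
  ext i j
  rw [Matrix.mul_apply, Matrix.one_apply]
  have h1 : ∀ k : Fin (2 ^ n), (sigmaMat n)ᵀ i k * sigmaMat n k j
      = (if (k : ℕ) = sigmaHat n (i : ℕ) then (1 : ℝ) else 0)
        * (if (k : ℕ) = sigmaHat n (j : ℕ) then (1 : ℝ) else 0) := by
    intro k
    rw [Matrix.transpose_apply]
    rfl
  rw [Finset.sum_congr rfl (fun k _ => h1 k),
    sum_if_right (sigmaHat_lt hn j.isLt) (fun k => if (k : ℕ) = sigmaHat n (i : ℕ) then (1:ℝ) else 0)]
  by_cases h : i = j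
  · rw [if_pos h, if_pos (by rw [h])]
  · rw [if_neg h, if_neg]
    intro hc
    exact h (Fin.ext (sigmaHat_inj hn j.isLt i.isLt hc)).symm

/-- For every `n ≥ 1`, the generator sums are conjugate by the
permutation matrix `σₙ`: `a⁽ⁿ⁾ + b⁽ⁿ⁾ = σₙ (a_L⁽ⁿ⁾ + b_L⁽ⁿ⁾) σₙ⁻¹`. -/
theorem generator_sums_conjugate (n : ℕ) (hn : 1 ≤ n) :
    aB n + bB n = sigmaMat n * (aL n + bL n) * (sigmaMat n)⁻¹ := by
  have hST := sigma_trans_mul n hn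
  have hTS : sigmaMat n * (sigmaMat n)ᵀ = 1 := mul_eq_one_comm.mp hST
  have hinv : (sigmaMat n)⁻¹ = (sigmaMat n)ᵀ := Matrix.inv_eq_right_inv hTS
  suffices key : (aB n + bB n) * sigmaMat n = sigmaMat n * (aL n + bL n) by
    rw [hinv]
    calc aB n + bB n = (aB n + bB n) * (sigmaMat n * (sigmaMat n)ᵀ) := by rw [hTS, mul_one]
    _ = ((aB n + bB n) * sigmaMat n) * (sigmaMat n)ᵀ := by rw [mul_assoc]
    _ = (sigmaMat n * (aL n + bL n)) * (sigmaMat n)ᵀ := by rw [key]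
  ext i j
  rw [Matrix.mul_apply, Matrix.mul_apply]
  have hσj : sigmaHat n (j : ℕ) < 2 ^ n := sigmaHat_lt hn j.isLt
  -- LHS
  have hL : ∀ k : Fin (2 ^ n), (aB n + bB n) i k * sigmaMat n k j
      = (fun k : Fin (2 ^ n) => (aB n + bB n) i k) k
        * (if (k : ℕ) = sigmaHat n (j : ℕ) then (1 : ℝ) else 0) := fun k => rfl
  rw [Finset.sum_congr rfl (fun k _ => hL k), sum_if_right hσj]
  have hA : (hatP n (j : ℕ)).1 < 2 ^ n := (hatP_lt n _ j.isLt).1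
  have hB : (hatP n (j : ℕ)).2 < 2 ^ n := (hatP_lt n _ j.isLt).2
  -- RHS
  have hR : ∀ k : Fin (2 ^ n), sigmaMat n i k * (aL n + bL n) k j
      = (fun k : Fin (2 ^ n) => sigmaMat n i k) k
          * (if (k : ℕ) = (hatP n (j : ℕ)).1 then (1 : ℝ) else 0)
        + (fun k : Fin (2 ^ n) => sigmaMat n i k) k
          * (if (k : ℕ) = (hatP n (j : ℕ)).2 then (1 : ℝ) else 0) := by
    intro k
    rw [Matrix.add_apply, (abL_apply n k j).1, (abL_apply n k j).2, mul_add]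
  rw [Finset.sum_congr rfl (fun k _ => hR k), Finset.sum_add_distrib,
    sum_if_right hA, sum_if_right hB]
  -- now both sides are explicit indicators
  have hval : ∀ (c : ℕ) (hc : c < 2 ^ n), ((⟨c, hc⟩ : Fin (2 ^ n)) : ℕ) = c := fun _ _ => rfl
  rw [Matrix.add_apply, (abB_apply n i ⟨_, hσj⟩).1, (abB_apply n i ⟨_, hσj⟩).2]
  have hσA : sigmaMat n i ⟨_, hA⟩ = if (i : ℕ) = sigmaHat n ((hatP n (j : ℕ)).1) then (1:ℝ) else 0 := rfl
  have hσB : sigmaMat n i ⟨_, hB⟩ = if (i : ℕ) = sigmaHat n ((hatP n (j : ℕ)).2) then (1:ℝ) else 0 := rfl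
  rw [hσA, hσB]
  simp only [hval]
  -- identify everything through Fd
  have hp2 : 2 ^ n / 2 = 2 ^ (n - 1) := by
    obtain ⟨m, rfl⟩ : ∃ m, n = m + 1 := ⟨n - 1, by omega⟩
    rw [pow_succ, Nat.add_sub_cancel]
    omega
  rw [hp2]
  simp only [sigmaHat_eq_Fd n hn (j : ℕ) j.isLt, sigmaHat_eq_Fd n hn _ hA,
    sigmaHat_eq_Fd n hn _ hB]
  rcases Fd_hat n (j : ℕ) hn j.isLt with ⟨e1, e2⟩ | ⟨e1, e2⟩
  · rw [e1, e2]
  · rw [e1, e2]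
    ring
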